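/- arXiv:1208.3029 — 4 statements merged into one kernel-verified Lean document; each statement's English description precedes it below -/
import Mathlib

section
/- Fix integers Δn and Δn̂. For any ε > 0 there exists M > 0 such that for all pairs (n, n̂) of nonnegative integers with n̂ ≥ 1, n + Δn ≥ 0, n̂ + Δn̂ ≥ 1, and with n ≥ M or n̂ ≥ M, one has |e^{−n/n̂} − (1 − 1/(n̂ + Δn̂))^{n + Δn}| ≤ ε. -/
lemma aux_pow_sub_pow (y z : ℝ) (hz : 0 ≤ z) (hzy : z ≤ y) :
    ∀ m : ℕ, y ^ (m + 1) - z ^ (m + 1) ≤ ((m : ℝ) + 1) * y ^ m * (y - z) := by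
  intro m
  induction m with
  | zero => simp
  | succ m ih =>
    have hy : 0 ≤ y := hz.trans hzy
    have hzm : z ^ (m + 1) ≤ y ^ (m + 1) := pow_le_pow_left₀ hz hzy _
    have h1 : y * (y ^ (m + 1) - z ^ (m + 1)) ≤ y * (((m : ℝ) + 1) * y ^ m * (y - z)) :=
      mul_le_mul_of_nonneg_left ih hy
    have h2 : z ^ (m + 1) * (y - z) ≤ y ^ (m + 1) * (y - z) :=
      mul_le_mul_of_nonneg_right hzm (by linarith)
    have key : y ^ (m + 2) - z ^ (m + 2)
        = y * (y ^ (m + 1) - z ^ (m + 1)) + z ^ (m + 1) * (y - z) := by ring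
    have key2 : y * (((m : ℝ) + 1) * y ^ m * (y - z)) + y ^ (m + 1) * (y - z)
        = ((m : ℝ) + 2) * y ^ (m + 1) * (y - z) := by ring
    push_cast
    nlinarith [h1, h2]

lemma aux_t_exp_neg_t (t : ℝ) (ht : 0 ≤ t) : t * Real.exp (-t) ≤ 1 := by
  have h1 : t ≤ Real.exp t := by have := Real.add_one_le_exp t; linarith
  have h2 : Real.exp t * Real.exp (-t) = 1 := by
    rw [← Real.exp_add]; simp
  nlinarith [Real.exp_pos (-t), Real.exp_pos t]

lemma aux_exp_half_le_two : Real.exp (1/2 : ℝ) ≤ 2 := by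
  have h : Real.exp (1/2 : ℝ) ^ (2:ℕ) = Real.exp 1 := by
    rw [← Real.exp_nat_mul]; norm_num
  nlinarith [Real.exp_one_lt_d9, Real.exp_pos (1/2 : ℝ)]

lemma exp_pow_bound (x : ℝ) (hx0 : 0 < x) (hx : x ≤ 1/2) (m : ℕ) :
    |Real.exp (-((m : ℝ) * x)) - (1 - x) ^ m| ≤ 2 * x := by
  set y := Real.exp (-x) with hy
  have hzy : 1 - x ≤ y := by have := Real.add_one_le_exp (-x); linarith
  have hz0 : (0:ℝ) ≤ 1 - x := by linarith
  have hy0 : 0 ≤ y := Real.exp_nonneg _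
  have hxy : Real.exp x * y = 1 := by rw [hy, ← Real.exp_add]; simp
  have hyx : y - (1 - x) ≤ x ^ 2 := by
    have h1 : 1 + x ≤ Real.exp x := by have := Real.add_one_le_exp x; linarith
    have h2 : y * (1 + x) ≤ 1 := by nlinarith
    nlinarith
  have hexp : Real.exp (-((m : ℝ) * x)) = y ^ m := by
    rw [hy, ← Real.exp_nat_mul]; congr 1; ring
  have hpow : (1 - x) ^ m ≤ y ^ m := pow_le_pow_left₀ hz0 hzy m
  rw [hexp, abs_of_nonneg (by linarith)]
  cases m with
  | zero => simpa using by linarith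
  | succ m =>
    have key := aux_pow_sub_pow y (1 - x) hz0 hzy m
    have hym : y ^ m = Real.exp x * y ^ (m + 1) := by
      rw [pow_succ, show Real.exp x * (y ^ m * y) = (Real.exp x * y) * y ^ m by ring,
        hxy, one_mul]
    have ht : ((m : ℝ) + 1) * x * y ^ (m + 1) ≤ 1 := by
      have h1 : y ^ (m + 1) = Real.exp (-(((m : ℝ) + 1) * x)) := by
        rw [hy, ← Real.exp_nat_mul]; push_cast; congr 1; ring
      rw [h1]
      exact aux_t_exp_neg_t _ (by positivity)
    have hex : Real.exp x ≤ 2 := by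
      calc Real.exp x ≤ Real.exp (1/2) := Real.exp_le_exp.2 hx
        _ ≤ 2 := aux_exp_half_le_two
    have hnn : (0:ℝ) ≤ ((m : ℝ) + 1) * y ^ m := by positivity
    calc y ^ (m + 1) - (1 - x) ^ (m + 1)
        ≤ ((m : ℝ) + 1) * y ^ m * (y - (1 - x)) := key
      _ ≤ ((m : ℝ) + 1) * y ^ m * x ^ 2 := mul_le_mul_of_nonneg_left hyx hnn
      _ = (((m : ℝ) + 1) * x * y ^ (m + 1)) * (Real.exp x * x) := by rw [hym]; ring
      _ ≤ 1 * (Real.exp x * x) := by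
          apply mul_le_mul_of_nonneg_right ht; positivity
      _ = Real.exp x * x := one_mul _
      _ ≤ 2 * x := mul_le_mul_of_nonneg_right hex hx0.le

lemma exp_neg_sub_le (a b : ℝ) (ha : 0 ≤ a) (h : a ≤ b) :
    Real.exp (-a) - Real.exp (-b) ≤ b - a := by
  have h1 : Real.exp (-a) * Real.exp (a - b) = Real.exp (-b) := by
    rw [← Real.exp_add]; congr 1; ring
  have h2 : 1 + (a - b) ≤ Real.exp (a - b) := by
    have := Real.add_one_le_exp (a - b); linarith
  have h3 : Real.exp (-a) ≤ 1 := by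
    calc Real.exp (-a) ≤ Real.exp 0 := Real.exp_le_exp.2 (by linarith)
      _ = 1 := Real.exp_zero
  nlinarith [Real.exp_pos (-a)]

lemma exp_neg_lipschitz (a b : ℝ) (ha : 0 ≤ a) (hb : 0 ≤ b) :
    |Real.exp (-a) - Real.exp (-b)| ≤ |a - b| := by
  rcases le_total a b with h | h
  · rw [abs_of_nonneg (sub_nonneg.2 (Real.exp_le_exp.2 (by linarith))),
      abs_of_nonpos (by linarith)]
    have := exp_neg_sub_le a b ha h
    linarith
  · rw [abs_of_nonpos (sub_nonpos.2 (Real.exp_le_exp.2 (by linarith))),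
      abs_of_nonneg (by linarith)]
    have := exp_neg_sub_le b a hb h
    linarith

set_option maxHeartbeats 800000
/-- Lemma 1, inequality (6): perturbed idle probability is uniformly approximated by
e^{-ρ}, ρ = n/n̂, when n or n̂ is large. -/
theorem perturbed_idle_prob_approx (Δn Δnhat : ℤ) (ε : ℝ) (hε : 0 < ε) :
    ∃ M : ℝ, 0 < M ∧ ∀ n nhat : ℕ, 1 ≤ nhat →
      0 ≤ (n : ℤ) + Δn → 1 ≤ (nhat : ℤ) + Δnhat →
      ((M ≤ (n : ℝ)) ∨ (M ≤ (nhat : ℝ))) →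
      |Real.exp (-((n : ℝ) / (nhat : ℝ)))
        - (1 - 1 / ((nhat : ℝ) + (Δnhat : ℝ))) ^ (((n : ℤ) + Δn).toNat)| ≤ ε := by
  obtain ⟨D1, hD1, habsdn1, habsdn2⟩ :
      ∃ D1 : ℝ, 0 ≤ D1 ∧ -D1 ≤ (Δn : ℝ) ∧ (Δn : ℝ) ≤ D1 :=
    ⟨|(Δn : ℝ)|, abs_nonneg _, neg_abs_le _, le_abs_self _⟩
  obtain ⟨D2, hD2, habsdh1, habsdh2⟩ :
      ∃ D2 : ℝ, 0 ≤ D2 ∧ -D2 ≤ (Δnhat : ℝ) ∧ (Δnhat : ℝ) ≤ D2 :=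
    ⟨|(Δnhat : ℝ)|, abs_nonneg _, neg_abs_le _, le_abs_self _⟩
  obtain ⟨C2, hC2ge, hC2eq⟩ : ∃ C2 : ℝ, 2 ≤ C2 ∧ C2 = 2 * (1 + D2) :=
    ⟨2 * (1 + D2), by nlinarith, rfl⟩
  have hC2pos : 0 < C2 := by linarith
  obtain ⟨L, hL1, hLC2⟩ : ∃ L : ℝ, 1 ≤ L ∧ Real.exp (-(L / C2)) ≤ ε := by
    refine ⟨C2 * (|Real.log (1 / ε)| + 1), by nlinarith [abs_nonneg (Real.log (1 / ε))], ?_⟩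
    have h1 : C2 * (|Real.log (1 / ε)| + 1) / C2 = |Real.log (1 / ε)| + 1 := by
      field_simp
    have h2 : -Real.log ε ≤ |Real.log (1 / ε)| + 1 := by
      rw [one_div, Real.log_inv]
      have := le_abs_self (-Real.log ε)
      linarith
    calc Real.exp (-(C2 * (|Real.log (1 / ε)| + 1) / C2))
        ≤ Real.exp (Real.log ε) := by
          apply Real.exp_le_exp.2
          rw [h1]
          linarith
      _ = ε := Real.exp_log hε
  have hLpos : 0 < L := by linarith
  obtain ⟨C3, hC3eq⟩ : ∃ C3 : ℝ, C3 = L * D2 + D1 + 2 := ⟨_, rfl⟩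
  have hC3pos : 0 < C3 := by rw [hC3eq]; positivity
  obtain ⟨M, hMpos, hM2D1, hMdivL⟩ :
      ∃ M : ℝ, 0 < M ∧ 2 * D1 + 1 ≤ M ∧ D2 + 2 + C3 / ε ≤ M / L := by
    refine ⟨L * (D2 + 2 + C3 / ε) + 2 * D1 + 1, by positivity, ?_, ?_⟩
    · have : 0 ≤ L * (D2 + 2 + C3 / ε) := by positivity
      linarith
    · rw [le_div_iff₀ hLpos]
      have h0 : 0 ≤ D2 + 2 + C3 / ε := by positivity
      nlinarith
  refine ⟨M, hMpos, ?_⟩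
  intro n nhat h1 h2 h3 h4
  have hH : (1 : ℝ) ≤ (nhat : ℝ) := by exact_mod_cast h1
  have hHpos : (0 : ℝ) < (nhat : ℝ) := by linarith
  have hN0 : (0 : ℝ) ≤ (n : ℝ) := Nat.cast_nonneg n
  have hK : (1 : ℝ) ≤ (nhat : ℝ) + (Δnhat : ℝ) := by exact_mod_cast h3
  have hKpos : (0 : ℝ) < (nhat : ℝ) + (Δnhat : ℝ) := by linarith
  set N : ℝ := (n : ℝ) with hNdef
  set H : ℝ := (nhat : ℝ) with hHdef
  set K : ℝ := H + (Δnhat : ℝ) with hKdef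
  set m : ℕ := ((n : ℤ) + Δn).toNat with hmdef
  have hmZ : (m : ℤ) = (n : ℤ) + Δn := Int.toNat_of_nonneg h2
  have hmR : (m : ℝ) = N + (Δn : ℝ) := by
    have : ((m : ℤ) : ℝ) = (((n : ℤ) : ℝ)) + ((Δn : ℤ) : ℝ) := by exact_mod_cast hmZ
    push_cast at this
    exact this
  have hm0 : (0 : ℝ) ≤ (m : ℝ) := Nat.cast_nonneg m
  have hPnn : 0 ≤ 1 - 1 / K := by
    rw [sub_nonneg]
    exact div_le_one_of_le₀ hK (by linarith)
  have hPle : (1 - 1 / K) ^ m ≤ Real.exp (-((m : ℝ) / K)) := by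
    have hone : 1 - 1 / K ≤ Real.exp (-(1 / K)) := by
      have := Real.add_one_le_exp (-(1 / K)); linarith
    calc (1 - 1 / K) ^ m ≤ (Real.exp (-(1 / K))) ^ m := pow_le_pow_left₀ hPnn hone m
      _ = Real.exp (-((m : ℝ) / K)) := by rw [← Real.exp_nat_mul]; congr 1; ring
  rcases le_or_gt (L * H) N with hcase | hcase
  · -- Case 1: N/H ≥ L, both terms are ≤ ε
    have hNM : M ≤ N := by
      rcases h4 with h | h
      · exact h
      · have e1 : 1 * M ≤ L * M := mul_le_mul_of_nonneg_right hL1 hMpos.le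
        have e2 : L * M ≤ L * H := mul_le_mul_of_nonneg_left h hLpos.le
        linarith
    have hN2D1 : 2 * D1 + 1 ≤ N := le_trans hM2D1 hNM
    have hmhalf : N / 2 ≤ (m : ℝ) := by rw [hmR]; linarith
    have hKle : K ≤ H * (1 + D2) := by
      have e1 : 1 * D2 ≤ H * D2 := mul_le_mul_of_nonneg_right hH hD2
      nlinarith
    have hb : L / C2 ≤ (m : ℝ) / K := by
      rw [div_le_div_iff₀ hC2pos hKpos]
      have e1 : L * K ≤ L * (H * (1 + D2)) := mul_le_mul_of_nonneg_left hKle hLpos.le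
      have e2 : (L * H) * (1 + D2) ≤ N * (1 + D2) :=
        mul_le_mul_of_nonneg_right hcase (by linarith)
      have e3 : (N / 2) * C2 ≤ (m : ℝ) * C2 := mul_le_mul_of_nonneg_right hmhalf hC2pos.le
      have e4 : (N / 2) * C2 = N * (1 + D2) := by rw [hC2eq]; ring
      linarith [mul_assoc L H (1 + D2)]
    have haL : L / C2 ≤ N / H := by
      have e1 : L ≤ N / H := by rw [le_div_iff₀ hHpos]; linarith
      have e2 : L / C2 ≤ L := div_le_self hLpos.le (by linarith)
      linarith
    have hE1 : Real.exp (-(N / H)) ≤ ε := by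
      calc Real.exp (-(N / H)) ≤ Real.exp (-(L / C2)) := Real.exp_le_exp.2 (by linarith)
        _ ≤ ε := hLC2
    have hE2 : (1 - 1 / K) ^ m ≤ ε := by
      calc (1 - 1 / K) ^ m ≤ Real.exp (-((m : ℝ) / K)) := hPle
        _ ≤ Real.exp (-(L / C2)) := Real.exp_le_exp.2 (by linarith)
        _ ≤ ε := hLC2
    have hE1n : 0 ≤ Real.exp (-(N / H)) := Real.exp_nonneg _
    have hE2n : 0 ≤ (1 - 1 / K) ^ m := pow_nonneg hPnn m
    rw [abs_le]
    constructor <;> linarith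
  · -- Case 2: N < L*H, so H (hence K) is large
    have hHM : M / L ≤ H := by
      rcases h4 with h | h
      · rw [div_le_iff₀ hLpos]
        have : M < L * H := lt_of_le_of_lt h hcase
        linarith [mul_comm L H]
      · calc M / L ≤ M := div_le_self hMpos.le hL1
          _ ≤ H := h
    have hK2 : 2 + C3 / ε ≤ K := by
      have : H - D2 ≤ K := by rw [hKdef]; linarith
      linarith [hMdivL, hHM]
    have hC3e : 0 ≤ C3 / ε := by positivity
    have hK2' : 2 ≤ K := by linarith
    have hC3K : C3 / K ≤ ε := by
      rw [div_le_iff₀ hKpos]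
      have hce : C3 / ε ≤ K := by linarith
      calc C3 = ε * (C3 / ε) := by field_simp
        _ ≤ ε * K := mul_le_mul_of_nonneg_left hce hε.le
    have hx : 1 / K ≤ 1 / 2 := by
      rw [div_le_div_iff₀ hKpos (by norm_num : (0:ℝ) < 2)]; linarith
    have hmain := exp_pow_bound (1 / K) (by positivity) hx m
    have hab := exp_neg_lipschitz (N / H) ((m : ℝ) * (1 / K)) (by positivity) (by positivity)
    have habs : |N / H - (m : ℝ) * (1 / K)| ≤ (L * D2 + D1) / K := by
      have heq : N / H - (m : ℝ) * (1 / K)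
          = (N * (Δnhat : ℝ) - (Δn : ℝ) * H) / (H * K) := by
        rw [hmR, hKdef]
        field_simp [show H + (Δnhat : ℝ) ≠ 0 from hKpos.ne']
        ring
      rw [heq, abs_div, abs_of_pos (by positivity : (0:ℝ) < H * K)]
      rw [div_le_div_iff₀ (by positivity) hKpos]
      have hnum : |N * (Δnhat : ℝ) - (Δn : ℝ) * H| ≤ N * D2 + D1 * H := by
        have t1 : |N * (Δnhat : ℝ) - (Δn : ℝ) * H| ≤ |N * (Δnhat : ℝ)| + |(Δn : ℝ) * H| :=
          abs_sub _ _
        have t2 : |N * (Δnhat : ℝ)| = N * |(Δnhat : ℝ)| := by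
          rw [abs_mul, abs_of_nonneg hN0]
        have t3 : |(Δn : ℝ) * H| = |(Δn : ℝ)| * H := by
          rw [abs_mul, abs_of_pos hHpos]
        have t4 : N * |(Δnhat : ℝ)| ≤ N * D2 :=
          mul_le_mul_of_nonneg_left (abs_le.2 ⟨habsdh1, habsdh2⟩) hN0
        have t5 : |(Δn : ℝ)| * H ≤ D1 * H :=
          mul_le_mul_of_nonneg_right (abs_le.2 ⟨habsdn1, habsdn2⟩) hHpos.le
        linarith
      have hnum2 : N * D2 + D1 * H ≤ H * (L * D2 + D1) := by
        have e1 : N * D2 ≤ (L * H) * D2 := mul_le_mul_of_nonneg_right hcase.le hD2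
        nlinarith
      have e1 : |N * (Δnhat : ℝ) - (Δn : ℝ) * H| * K ≤ (H * (L * D2 + D1)) * K :=
        mul_le_mul_of_nonneg_right (hnum.trans hnum2) hKpos.le
      linarith [mul_comm ((L * D2 + D1)) (H * K), mul_assoc H (L * D2 + D1) K,
        mul_comm H (L * D2 + D1)]
    calc |Real.exp (-(N / H)) - (1 - 1 / K) ^ m|
        ≤ |Real.exp (-(N / H)) - Real.exp (-((m : ℝ) * (1 / K)))|
          + |Real.exp (-((m : ℝ) * (1 / K))) - (1 - 1 / K) ^ m| := abs_sub_le _ _ _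
      _ ≤ (L * D2 + D1) / K + 2 * (1 / K) := add_le_add (hab.trans habs) hmain
      _ = C3 / K := by rw [hC3eq]; ring
      _ ≤ ε := hC3K
end

section
/- Define μ(ν, q, k_m) = Σ_{k=1}^{k_m − 1} k^ν q^{k−1}(1 − q) + k_m^ν q^{k_m − 1} for real ν > 0, integer k_m ≥ 2, and q ∈ (0,1). Then for fixed ν and k_m, the function q ↦ μ(ν, q, k_m) is strictly increasing on (0,1). -/
open Finset Real

/-- μ(ν, q, k_m) = Σ_{k=1}^{k_m−1} k^ν q^{k−1}(1−q) + k_m^ν q^{k_m−1}. -/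
noncomputable def mu (ν q : ℝ) (km : ℕ) : ℝ :=
  ∑ k ∈ Finset.Icc 1 (km - 1), (k : ℝ) ^ ν * q ^ (k - 1) * (1 - q)
    + (km : ℝ) ^ ν * q ^ (km - 1)

lemma mu_eq_aux (ν q : ℝ) (n : ℕ) :
    (∑ i ∈ Finset.range n, ((i + 1 : ℕ) : ℝ) ^ ν * q ^ i * (1 - q))
      + ((n + 1 : ℕ) : ℝ) ^ ν * q ^ n
    = 1 + ∑ i ∈ Finset.range n,
        (((i + 2 : ℕ) : ℝ) ^ ν - ((i + 1 : ℕ) : ℝ) ^ ν) * q ^ (i + 1) := by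
  induction n with
  | zero => simp [Real.one_rpow]
  | succ n ih =>
    rw [Finset.sum_range_succ, Finset.sum_range_succ]
    push_cast at ih ⊢
    have h2 : ((n : ℝ) + 1 + 1) ^ ν = ((n : ℝ) + 2) ^ ν := by congr 1; ring
    linear_combination ih + (q * q ^ n) * h2

lemma mu_eq (ν q : ℝ) (n : ℕ) :
    mu ν q (n + 1) = 1 + ∑ i ∈ Finset.range n,
        (((i + 2 : ℕ) : ℝ) ^ ν - ((i + 1 : ℕ) : ℝ) ^ ν) * q ^ (i + 1) := by
  rw [← mu_eq_aux ν q n]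
  unfold mu
  simp only [Nat.add_sub_cancel]
  congr 1
  rw [← Finset.Ico_add_one_right_eq_Icc, Finset.sum_Ico_eq_sum_range]
  norm_num
  refine Finset.sum_congr rfl fun i hi => ?_
  rw [add_comm (1 : ℝ)]

/-- For fixed ν > 0 and k_m ≥ 2, q ↦ μ(ν, q, k_m) is strictly increasing on (0,1). -/
theorem mu_strictMonoOn (ν : ℝ) (hν : 0 < ν) (km : ℕ) (hkm : 2 ≤ km) :
    StrictMonoOn (fun q => mu ν q km) (Set.Ioo (0 : ℝ) 1) := by
  intro a ha b hb hab
  obtain ⟨n, rfl⟩ : ∃ n, km = n + 1 := ⟨km - 1, by omega⟩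
  have hn : 1 ≤ n := by omega
  simp only [mu_eq]
  have hsum : ∑ i ∈ Finset.range n,
      (((i + 2 : ℕ) : ℝ) ^ ν - ((i + 1 : ℕ) : ℝ) ^ ν) * a ^ (i + 1)
      < ∑ i ∈ Finset.range n,
      (((i + 2 : ℕ) : ℝ) ^ ν - ((i + 1 : ℕ) : ℝ) ^ ν) * b ^ (i + 1) := by
    apply Finset.sum_lt_sum_of_nonempty
    · exact Finset.nonempty_range_iff.mpr (by omega)
    · intro i _
      have hc : 0 < ((i + 2 : ℕ) : ℝ) ^ ν - ((i + 1 : ℕ) : ℝ) ^ ν := by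
        have := Real.rpow_lt_rpow (x := ((i + 1 : ℕ) : ℝ)) (y := ((i + 2 : ℕ) : ℝ))
          (by positivity) (by push_cast; linarith) hν
        linarith
      have hp : a ^ (i + 1) < b ^ (i + 1) :=
        pow_lt_pow_left₀ hab (le_of_lt ha.1) (Nat.succ_ne_zero i)
      exact mul_lt_mul_of_pos_left hp hc
  linarith
end

section
/- Let k_m ≥ 1 be an integer and q_0, q_1, q_c ∈ (0,1) with q_0 + q_1 + q_c = 1. Define a Markov chain on the state space S_K = {−k_m, ..., −1, 0, 1, ..., k_m} with transition probabilities: from state k ≤ 0, go to max(k − 1, −k_m) with probability q_0; from state k > 0, go to −1 with probability q_0; from any state, go to 0 with probability q_1; from state k < 0, go to 1 with probability q_c; from state k ≥ 0, go to min(k + 1, k_m) with probability q_c. Then the probability vector π with π_{−k_m} = q_0^{k_m}, π_k = q_0^{|k|}(1 − q_0) for −k_m + 1 ≤ k ≤ −1, π_0 = q_1, π_k = q_c^{k}(1 − q_c) for 1 ≤ k ≤ k_m − 1, and π_{k_m} = q_c^{k_m}, is a stationary distribution: Σ_k π_k = 1 and π_j = Σ_k π_k p_{kj} for all j ∈ S_K.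 -/
/-- One-step transition probabilities of the FASA memory chain on {−k_m, …, k_m}. -/
noncomputable def fasaP (km : ℕ) (Q0 Q1 Qc : ℝ) (k j : ℤ) : ℝ :=
  (if k ≤ 0 ∧ j = max (k - 1) (-(km : ℤ)) then Q0 else 0)
    + (if 0 < k ∧ j = -1 then Q0 else 0)
    + (if j = 0 then Q1 else 0)
    + (if k < 0 ∧ j = 1 then Qc else 0)
    + (if 0 ≤ k ∧ j = min (k + 1) (km : ℤ) then Qc else 0)

/-- Candidate stationary distribution of the FASA memory chain. -/
noncomputable def fasaPi (km : ℕ) (Q0 Q1 Qc : ℝ) (k : ℤ) : ℝ :=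
  if k = -(km : ℤ) then Q0 ^ km
  else if k < 0 then Q0 ^ k.natAbs * (1 - Q0)
  else if k = 0 then Q1
  else if k < (km : ℤ) then Qc ^ k.natAbs * (1 - Qc)
  else Qc ^ km

lemma fasa_geo (x : ℝ) (n : ℕ) :
    ∑ k ∈ Finset.Icc (1:ℤ) (n:ℤ), x ^ k.natAbs * (1 - x) = x * (1 - x ^ n) := by
  induction n with
  | zero => simp
  | succ n ih =>
    have h : Finset.Icc (1:ℤ) ((n+1:ℕ):ℤ) = insert ((n:ℤ)+1) (Finset.Icc (1:ℤ) (n:ℤ)) := by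
      ext k
      simp only [Finset.mem_Icc, Finset.mem_insert]
      omega
    have hna : ((n:ℤ)+1).natAbs = n+1 := by omega
    rw [h, Finset.sum_insert (by simp only [Finset.mem_Icc]; omega), ih, hna, pow_succ]
    ring

lemma fasa_tail (x : ℝ) (n : ℕ) (hn : 1 ≤ n) (g : ℤ → ℝ)
    (htop : g (n:ℤ) = x ^ n)
    (hmid : ∀ k : ℤ, 1 ≤ k → k < (n:ℤ) → g k = x ^ k.natAbs * (1 - x)) :
    ∑ k ∈ Finset.Icc (1:ℤ) (n:ℤ), g k = x := by
  have h : Finset.Icc (1:ℤ) (n:ℤ) = insert (n:ℤ) (Finset.Icc (1:ℤ) ((n-1:ℕ):ℤ)) := by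
    ext k
    simp only [Finset.mem_Icc, Finset.mem_insert]
    omega
  have hmid' : ∑ k ∈ Finset.Icc (1:ℤ) ((n-1:ℕ):ℤ), g k
      = ∑ k ∈ Finset.Icc (1:ℤ) ((n-1:ℕ):ℤ), x ^ k.natAbs * (1 - x) :=
    Finset.sum_congr rfl (fun k hk => by
      rw [Finset.mem_Icc] at hk
      exact hmid k hk.1 (by omega))
  rw [h, Finset.sum_insert (by simp only [Finset.mem_Icc]; omega), htop, hmid', fasa_geo]
  have hp : x ^ (n-1) * x = x ^ n := by rw [← pow_succ]; congr 1; omega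
  linear_combination -hp

lemma fasa_sum_ite {s T : Finset ℤ} {P : ℤ → Prop} [DecidablePred P] {f : ℤ → ℝ}
    (h : ∀ k, k ∈ T ↔ k ∈ s ∧ P k) :
    (∑ k ∈ s, if P k then f k else 0) = ∑ k ∈ T, f k := by
  rw [← Finset.sum_filter]
  refine Finset.sum_congr ?_ fun _ _ => rfl
  ext k
  rw [Finset.mem_filter]
  exact (h k).symm

/-- π is a stationary distribution of the FASA memory chain: it sums to 1 and
satisfies the balance equations π_j = Σ_k π_k p_{kj}. -/
theorem fasa_memory_chain_stationary (km : ℕ) (hkm : 1 ≤ km) (Q0 Q1 Qc : ℝ)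
    (h0 : Q0 ∈ Set.Ioo (0 : ℝ) 1) (h1 : Q1 ∈ Set.Ioo (0 : ℝ) 1)
    (hc : Qc ∈ Set.Ioo (0 : ℝ) 1) (hsum : Q0 + Q1 + Qc = 1) :
    (∑ k ∈ Finset.Icc (-(km : ℤ)) (km : ℤ), fasaPi km Q0 Q1 Qc k) = 1 ∧
    ∀ j ∈ Finset.Icc (-(km : ℤ)) (km : ℤ),
      fasaPi km Q0 Q1 Qc j
        = ∑ k ∈ Finset.Icc (-(km : ℤ)) (km : ℤ),
            fasaPi km Q0 Q1 Qc k * fasaP km Q0 Q1 Qc k j := by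
  set Pi : ℤ → ℝ := fasaPi km Q0 Q1 Qc with hPi
  -- values of Pi
  have hPtop : Pi (km:ℤ) = Qc ^ km := by
    have n1 : ¬((km:ℤ) = -(km:ℤ)) := by omega
    have n2 : ¬((km:ℤ) < 0) := by omega
    have n3 : ¬((km:ℤ) = 0) := by omega
    have n4 : ¬((km:ℤ) < (km:ℤ)) := by omega
    rw [hPi]; simp only [fasaPi, if_neg n1, if_neg n2, if_neg n3, if_neg n4]
  have hPmidpos : ∀ k : ℤ, 1 ≤ k → k < (km:ℤ) → Pi k = Qc ^ k.natAbs * (1 - Qc) := by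
    intro k hk1 hk2
    have n1 : ¬(k = -(km:ℤ)) := by omega
    have n2 : ¬(k < 0) := by omega
    have n3 : ¬(k = 0) := by omega
    rw [hPi]; simp only [fasaPi, if_neg n1, if_neg n2, if_neg n3, if_pos hk2]
  have hPbot : Pi (-(km:ℤ)) = Q0 ^ km := by
    rw [hPi]; simp [fasaPi]
  have hPmidneg : ∀ k : ℤ, -(km:ℤ) < k → k ≤ -1 → Pi k = Q0 ^ k.natAbs * (1 - Q0) := by
    intro k hk1 hk2
    have n1 : ¬(k = -(km:ℤ)) := by omega
    have p2 : k < 0 := by omega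
    rw [hPi]; simp only [fasaPi, if_neg n1, if_pos p2]
  have hP0 : Pi 0 = Q1 := by
    have n1 : ¬((0:ℤ) = -(km:ℤ)) := by omega
    have n2 : ¬((0:ℤ) < 0) := by omega
    rw [hPi]; simp [fasaPi, n1, n2]
  -- partial sums
  have hPos : ∑ k ∈ Finset.Icc (1:ℤ) (km:ℤ), Pi k = Qc :=
    fasa_tail Qc km hkm Pi hPtop hPmidpos
  have himg : Finset.Icc (-(km:ℤ)) (-1:ℤ)
      = Finset.image (fun k => -k) (Finset.Icc (1:ℤ) (km:ℤ)) := by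
    ext k
    simp only [Finset.mem_image, Finset.mem_Icc]
    constructor
    · intro hk; exact ⟨-k, ⟨by omega, by omega⟩, by omega⟩
    · rintro ⟨a, ha, rfl⟩; omega
  have hNeg : ∑ k ∈ Finset.Icc (-(km:ℤ)) (-1:ℤ), Pi k = Q0 := by
    rw [himg, Finset.sum_image (fun x _ y _ h => by omega)]
    exact fasa_tail Q0 km hkm (fun k => Pi (-k)) hPbot
      (fun k hk1 hk2 => by
        show Pi (-k) = Q0 ^ k.natAbs * (1 - Q0)
        rw [hPmidneg (-k) (by omega) (by omega), Int.natAbs_neg])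
  have hsplit : Finset.Icc (-(km:ℤ)) (km:ℤ)
      = Finset.Icc (-(km:ℤ)) (-1:ℤ) ∪ Finset.Icc (0:ℤ) (km:ℤ) := by
    ext k; simp only [Finset.mem_union, Finset.mem_Icc]; omega
  have hdisj : Disjoint (Finset.Icc (-(km:ℤ)) (-1:ℤ)) (Finset.Icc (0:ℤ) (km:ℤ)) := by
    rw [Finset.disjoint_left]
    intro a ha hb
    rw [Finset.mem_Icc] at ha hb
    omega
  have hsplit0 : Finset.Icc (0:ℤ) (km:ℤ) = insert 0 (Finset.Icc (1:ℤ) (km:ℤ)) := by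
    ext k; simp only [Finset.mem_insert, Finset.mem_Icc]; omega
  have hTot : ∑ k ∈ Finset.Icc (-(km:ℤ)) (km:ℤ), Pi k = 1 := by
    rw [hsplit, Finset.sum_union hdisj, hNeg, hsplit0,
      Finset.sum_insert (by simp only [Finset.mem_Icc]; omega), hP0, hPos]
    linarith
  refine ⟨hTot, ?_⟩
  intro j hj
  rw [Finset.mem_Icc] at hj
  have hexp : (∑ k ∈ Finset.Icc (-(km:ℤ)) (km:ℤ), Pi k * fasaP km Q0 Q1 Qc k j)
      = (∑ k ∈ Finset.Icc (-(km:ℤ)) (km:ℤ),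
          if k ≤ 0 ∧ j = max (k - 1) (-(km:ℤ)) then Pi k * Q0 else 0)
        + (∑ k ∈ Finset.Icc (-(km:ℤ)) (km:ℤ), if 0 < k ∧ j = -1 then Pi k * Q0 else 0)
        + (∑ k ∈ Finset.Icc (-(km:ℤ)) (km:ℤ), if j = 0 then Pi k * Q1 else 0)
        + (∑ k ∈ Finset.Icc (-(km:ℤ)) (km:ℤ), if k < 0 ∧ j = 1 then Pi k * Qc else 0)
        + (∑ k ∈ Finset.Icc (-(km:ℤ)) (km:ℤ),
          if 0 ≤ k ∧ j = min (k + 1) (km:ℤ) then Pi k * Qc else 0) := by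
    rw [← Finset.sum_add_distrib, ← Finset.sum_add_distrib, ← Finset.sum_add_distrib,
      ← Finset.sum_add_distrib]
    refine Finset.sum_congr rfl fun k _ => ?_
    simp only [fasaP, mul_add, mul_ite, mul_zero]
  rw [hexp]
  rcases lt_trichotomy j 0 with hneg | rfl | hpos
  · -- j < 0
    by_cases hA : j = -(km:ℤ)
    · subst hA
      have e1 : (∑ k ∈ Finset.Icc (-(km:ℤ)) (km:ℤ),
          if k ≤ 0 ∧ -(km:ℤ) = max (k - 1) (-(km:ℤ)) then Pi k * Q0 else 0)
          = Pi (-(km:ℤ)) * Q0 + Pi (-(km:ℤ) + 1) * Q0 := by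
        refine (fasa_sum_ite (T := {-(km:ℤ), -(km:ℤ) + 1}) fun k => ?_).trans
          (Finset.sum_pair (by omega))
        simp only [Finset.mem_insert, Finset.mem_singleton, Finset.mem_Icc]
        omega
      have e3 : (∑ k ∈ Finset.Icc (-(km:ℤ)) (km:ℤ),
          if -(km:ℤ) = 0 then Pi k * Q1 else 0) = 0 :=
        Finset.sum_eq_zero fun k _ => if_neg (by omega)
      have e4 : (∑ k ∈ Finset.Icc (-(km:ℤ)) (km:ℤ),
          if k < 0 ∧ -(km:ℤ) = 1 then Pi k * Qc else 0) = 0 :=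
        Finset.sum_eq_zero fun k _ => if_neg (by omega)
      have e5 : (∑ k ∈ Finset.Icc (-(km:ℤ)) (km:ℤ),
          if 0 ≤ k ∧ -(km:ℤ) = min (k + 1) (km:ℤ) then Pi k * Qc else 0) = 0 :=
        Finset.sum_eq_zero fun k _ => if_neg (by omega)
      by_cases hk1 : km = 1
      · have e2 : (∑ k ∈ Finset.Icc (-(km:ℤ)) (km:ℤ),
            if 0 < k ∧ -(km:ℤ) = -1 then Pi k * Q0 else 0) = Qc * Q0 := by
          refine (fasa_sum_ite (T := Finset.Icc (1:ℤ) (km:ℤ)) fun k => ?_).trans ?_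
          · simp only [Finset.mem_Icc, and_true]; omega
          · rw [← Finset.sum_mul, hPos]
        rw [e1, e2, e3, e4, e5, hPbot, show -(km:ℤ) + 1 = 0 by omega, hP0, hk1]
        linear_combination (-Q0) * hsum
      · have e2 : (∑ k ∈ Finset.Icc (-(km:ℤ)) (km:ℤ),
            if 0 < k ∧ -(km:ℤ) = -1 then Pi k * Q0 else 0) = 0 :=
          Finset.sum_eq_zero fun k _ => if_neg (by omega)
        have hn1 : (-(km:ℤ) + 1).natAbs = km - 1 := by omega
        rw [e1, e2, e3, e4, e5, hPbot, hPmidneg (-(km:ℤ) + 1) (by omega) (by omega), hn1,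
          show Q0 ^ km = Q0 ^ (km - 1) * Q0 by rw [← pow_succ]; congr 1; omega]
        ring
    · -- -km < j < 0
      have e3 : (∑ k ∈ Finset.Icc (-(km:ℤ)) (km:ℤ),
          if j = 0 then Pi k * Q1 else 0) = 0 :=
        Finset.sum_eq_zero fun k _ => if_neg (by omega)
      have e4 : (∑ k ∈ Finset.Icc (-(km:ℤ)) (km:ℤ),
          if k < 0 ∧ j = 1 then Pi k * Qc else 0) = 0 :=
        Finset.sum_eq_zero fun k _ => if_neg (by omega)
      have e5 : (∑ k ∈ Finset.Icc (-(km:ℤ)) (km:ℤ),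
          if 0 ≤ k ∧ j = min (k + 1) (km:ℤ) then Pi k * Qc else 0) = 0 :=
        Finset.sum_eq_zero fun k _ => if_neg (by omega)
      have e1 : (∑ k ∈ Finset.Icc (-(km:ℤ)) (km:ℤ),
          if k ≤ 0 ∧ j = max (k - 1) (-(km:ℤ)) then Pi k * Q0 else 0)
          = Pi (j + 1) * Q0 := by
        refine (fasa_sum_ite (T := {j + 1}) fun k => ?_).trans (Finset.sum_singleton _ _)
        simp only [Finset.mem_singleton, Finset.mem_Icc]
        omega
      by_cases hB1 : j = -1
      · subst hB1
        have e2 : (∑ k ∈ Finset.Icc (-(km:ℤ)) (km:ℤ),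
            if 0 < k ∧ (-1:ℤ) = -1 then Pi k * Q0 else 0) = Qc * Q0 := by
          refine (fasa_sum_ite (T := Finset.Icc (1:ℤ) (km:ℤ)) fun k => ?_).trans ?_
          · simp only [Finset.mem_Icc, and_true]; omega
          · rw [← Finset.sum_mul, hPos]
        rw [e1, e2, e3, e4, e5, show (-1:ℤ) + 1 = 0 by omega, hP0,
          hPmidneg (-1) (by omega) (by omega), show ((-1:ℤ)).natAbs = 1 by omega]
        linear_combination (-Q0) * hsum
      · have e2 : (∑ k ∈ Finset.Icc (-(km:ℤ)) (km:ℤ),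
            if 0 < k ∧ j = -1 then Pi k * Q0 else 0) = 0 :=
          Finset.sum_eq_zero fun k _ => if_neg (by omega)
        rw [e1, e2, e3, e4, e5, hPmidneg (j + 1) (by omega) (by omega),
          hPmidneg j (by omega) (by omega),
          show Q0 ^ j.natAbs = Q0 ^ (j + 1).natAbs * Q0 by rw [← pow_succ]; congr 1; omega]
        ring
  · -- j = 0
    have e1 : (∑ k ∈ Finset.Icc (-(km:ℤ)) (km:ℤ),
        if k ≤ 0 ∧ (0:ℤ) = max (k - 1) (-(km:ℤ)) then Pi k * Q0 else 0) = 0 :=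
      Finset.sum_eq_zero fun k _ => if_neg (by omega)
    have e2 : (∑ k ∈ Finset.Icc (-(km:ℤ)) (km:ℤ),
        if 0 < k ∧ (0:ℤ) = -1 then Pi k * Q0 else 0) = 0 :=
      Finset.sum_eq_zero fun k _ => if_neg (by omega)
    have e3 : (∑ k ∈ Finset.Icc (-(km:ℤ)) (km:ℤ),
        if (0:ℤ) = 0 then Pi k * Q1 else 0) = Q1 := by
      refine (fasa_sum_ite (T := Finset.Icc (-(km:ℤ)) (km:ℤ)) fun k => ?_).trans ?_
      · simp only [Finset.mem_Icc, and_true]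
      · rw [← Finset.sum_mul, hTot, one_mul]
    have e4 : (∑ k ∈ Finset.Icc (-(km:ℤ)) (km:ℤ),
        if k < 0 ∧ (0:ℤ) = 1 then Pi k * Qc else 0) = 0 :=
      Finset.sum_eq_zero fun k _ => if_neg (by omega)
    have e5 : (∑ k ∈ Finset.Icc (-(km:ℤ)) (km:ℤ),
        if 0 ≤ k ∧ (0:ℤ) = min (k + 1) (km:ℤ) then Pi k * Qc else 0) = 0 :=
      Finset.sum_eq_zero fun k _ => if_neg (by omega)
    rw [e1, e2, e3, e4, e5, hP0]
    ring
  · -- 0 < j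
    by_cases hE : j = (km:ℤ)
    · subst hE
      have e1 : (∑ k ∈ Finset.Icc (-(km:ℤ)) (km:ℤ),
          if k ≤ 0 ∧ (km:ℤ) = max (k - 1) (-(km:ℤ)) then Pi k * Q0 else 0) = 0 :=
        Finset.sum_eq_zero fun k _ => if_neg (by omega)
      have e2 : (∑ k ∈ Finset.Icc (-(km:ℤ)) (km:ℤ),
          if 0 < k ∧ (km:ℤ) = -1 then Pi k * Q0 else 0) = 0 :=
        Finset.sum_eq_zero fun k _ => if_neg (by omega)
      have e3 : (∑ k ∈ Finset.Icc (-(km:ℤ)) (km:ℤ),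
          if (km:ℤ) = 0 then Pi k * Q1 else 0) = 0 :=
        Finset.sum_eq_zero fun k _ => if_neg (by omega)
      have e5 : (∑ k ∈ Finset.Icc (-(km:ℤ)) (km:ℤ),
          if 0 ≤ k ∧ (km:ℤ) = min (k + 1) (km:ℤ) then Pi k * Qc else 0)
          = Pi ((km:ℤ) - 1) * Qc + Pi (km:ℤ) * Qc := by
        refine (fasa_sum_ite (T := {(km:ℤ) - 1, (km:ℤ)}) fun k => ?_).trans
          (Finset.sum_pair (by omega))
        simp only [Finset.mem_insert, Finset.mem_singleton, Finset.mem_Icc]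
        omega
      by_cases hk1 : km = 1
      · have e4 : (∑ k ∈ Finset.Icc (-(km:ℤ)) (km:ℤ),
            if k < 0 ∧ (km:ℤ) = 1 then Pi k * Qc else 0) = Q0 * Qc := by
          refine (fasa_sum_ite (T := Finset.Icc (-(km:ℤ)) (-1:ℤ)) fun k => ?_).trans ?_
          · simp only [Finset.mem_Icc, and_true]; omega
          · rw [← Finset.sum_mul, hNeg]
        rw [e1, e2, e3, e4, e5, hPtop, show (km:ℤ) - 1 = 0 by omega, hP0, hk1]
        linear_combination (-Qc) * hsum
      · have e4 : (∑ k ∈ Finset.Icc (-(km:ℤ)) (km:ℤ),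
            if k < 0 ∧ (km:ℤ) = 1 then Pi k * Qc else 0) = 0 :=
          Finset.sum_eq_zero fun k _ => if_neg (by omega)
        have hn1 : ((km:ℤ) - 1).natAbs = km - 1 := by omega
        rw [e1, e2, e3, e4, e5, hPtop, hPmidpos ((km:ℤ) - 1) (by omega) (by omega), hn1,
          show Qc ^ km = Qc ^ (km - 1) * Qc by rw [← pow_succ]; congr 1; omega]
        ring
    · -- 0 < j < km
      have e1 : (∑ k ∈ Finset.Icc (-(km:ℤ)) (km:ℤ),
          if k ≤ 0 ∧ j = max (k - 1) (-(km:ℤ)) then Pi k * Q0 else 0) = 0 :=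
        Finset.sum_eq_zero fun k _ => if_neg (by omega)
      have e2 : (∑ k ∈ Finset.Icc (-(km:ℤ)) (km:ℤ),
          if 0 < k ∧ j = -1 then Pi k * Q0 else 0) = 0 :=
        Finset.sum_eq_zero fun k _ => if_neg (by omega)
      have e3 : (∑ k ∈ Finset.Icc (-(km:ℤ)) (km:ℤ),
          if j = 0 then Pi k * Q1 else 0) = 0 :=
        Finset.sum_eq_zero fun k _ => if_neg (by omega)
      have e5 : (∑ k ∈ Finset.Icc (-(km:ℤ)) (km:ℤ),
          if 0 ≤ k ∧ j = min (k + 1) (km:ℤ) then Pi k * Qc else 0)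
          = Pi (j - 1) * Qc := by
        refine (fasa_sum_ite (T := {j - 1}) fun k => ?_).trans (Finset.sum_singleton _ _)
        simp only [Finset.mem_singleton, Finset.mem_Icc]
        omega
      by_cases hD1 : j = 1
      · subst hD1
        have e4 : (∑ k ∈ Finset.Icc (-(km:ℤ)) (km:ℤ),
            if k < 0 ∧ (1:ℤ) = 1 then Pi k * Qc else 0) = Q0 * Qc := by
          refine (fasa_sum_ite (T := Finset.Icc (-(km:ℤ)) (-1:ℤ)) fun k => ?_).trans ?_
          · simp only [Finset.mem_Icc, and_true]; omega
          · rw [← Finset.sum_mul, hNeg]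
        rw [e1, e2, e3, e4, e5, show (1:ℤ) - 1 = 0 by omega, hP0,
          hPmidpos 1 (by omega) (by omega), show ((1:ℤ)).natAbs = 1 by omega]
        linear_combination (-Qc) * hsum
      · have e4 : (∑ k ∈ Finset.Icc (-(km:ℤ)) (km:ℤ),
            if k < 0 ∧ j = 1 then Pi k * Qc else 0) = 0 :=
          Finset.sum_eq_zero fun k _ => if_neg (by omega)
        rw [e1, e2, e3, e4, e5, hPmidpos (j - 1) (by omega) (by omega),
          hPmidpos j (by omega) (by omega),
          show Qc ^ j.natAbs = Qc ^ (j - 1).natAbs * Qc by rw [← pow_succ]; congr 1; omega]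
        ring
end

section
/- For the Markov chain K' on {−k_m, ..., k_m} defined by the FASA memory transitions with slot-outcome probabilities q_0, q_1, q_c ∈ (0,1) summing to 1, the k_m-step transition probability from any initial state k to any state j equals the stationary probability π_j; i.e., the chain reaches its stationary distribution exactly after k_m steps. -/
/-- n-step transition probabilities of the FASA memory chain. -/
noncomputable def fasaPn (km : ℕ) (Q0 Q1 Qc : ℝ) : ℕ → ℤ → ℤ → ℝ
  | 0, k, j => if k = j then 1 else 0
  | n + 1, k, j =>
      ∑ i ∈ Finset.Icc (-(km : ℤ)) (km : ℤ),
        fasaP km Q0 Q1 Qc k i * fasaPn km Q0 Q1 Qc n i j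

/-- Explicit formula for the n-step transition probabilities, valid for 1 ≤ n ≤ km. -/
noncomputable def fasaF (km : ℕ) (Q0 Q1 Qc : ℝ) (n : ℕ) (k j : ℤ) : ℝ :=
  if j = 0 then Q1
  else if 0 < j then
    (if j < (n : ℤ) then Qc ^ j.natAbs * (1 - Qc)
     else if j = (if k < 0 then (n : ℤ) else min (k + n) (km : ℤ)) then Qc ^ n else 0)
  else
    (if -(n : ℤ) < j then Q0 ^ j.natAbs * (1 - Q0)
     else if j = (if 0 < k then -(n : ℤ) else max (k - n) (-(km : ℤ))) then Q0 ^ n else 0)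

lemma fasaF_zero (km : ℕ) (Q0 Q1 Qc : ℝ) (n : ℕ) (k : ℤ) :
    fasaF km Q0 Q1 Qc n k 0 = Q1 := by simp [fasaF]

lemma fasaF_pos (km : ℕ) (Q0 Q1 Qc : ℝ) (n : ℕ) (k j : ℤ) (hj : 0 < j) :
    fasaF km Q0 Q1 Qc n k j =
      (if j < (n : ℤ) then Qc ^ j.natAbs * (1 - Qc)
       else if j = (if k < 0 then (n : ℤ) else min (k + n) (km : ℤ)) then Qc ^ n else 0) := by
  rw [fasaF, if_neg (by omega), if_pos hj]

lemma fasaF_neg (km : ℕ) (Q0 Q1 Qc : ℝ) (n : ℕ) (k j : ℤ) (hj : j < 0) :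
    fasaF km Q0 Q1 Qc n k j =
      (if -(n : ℤ) < j then Q0 ^ j.natAbs * (1 - Q0)
       else if j = (if 0 < k then -(n : ℤ) else max (k - n) (-(km : ℤ))) then Q0 ^ n else 0) := by
  rw [fasaF, if_neg (by omega), if_neg (by omega)]

lemma sum_pt (km : ℕ) (g : ℤ → ℝ) (a : ℤ) (ha : a ∈ Finset.Icc (-(km : ℤ)) (km : ℤ)) (c : ℝ) :
    ∑ i ∈ Finset.Icc (-(km : ℤ)) (km : ℤ), (if i = a then c else 0) * g i = c * g a := by
  simp [ite_mul, Finset.sum_ite_eq', ha]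

lemma sum_pt' (km : ℕ) (g : ℤ → ℝ) (C : Prop) [Decidable C] (a : ℤ)
    (ha : a ∈ Finset.Icc (-(km : ℤ)) (km : ℤ)) (c : ℝ) :
    ∑ i ∈ Finset.Icc (-(km : ℤ)) (km : ℤ), (if C ∧ i = a then c else 0) * g i
      = if C then c * g a else 0 := by
  by_cases hC : C
  · rw [if_pos hC]
    simp only [hC, true_and]
    exact sum_pt km g a ha c
  · simp [hC]

lemma fasa_sum (km : ℕ) (hkm : 1 ≤ km) (Q0 Q1 Qc : ℝ) (k : ℤ)
    (hk : k ∈ Finset.Icc (-(km : ℤ)) (km : ℤ)) (g : ℤ → ℝ) :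
    ∑ i ∈ Finset.Icc (-(km : ℤ)) (km : ℤ), fasaP km Q0 Q1 Qc k i * g i
      = Q0 * g (if k ≤ 0 then max (k - 1) (-(km : ℤ)) else -1) + Q1 * g 0
        + Qc * g (if k < 0 then 1 else min (k + 1) (km : ℤ)) := by
  simp only [Finset.mem_Icc] at hk
  have h1 : max (k - 1) (-(km : ℤ)) ∈ Finset.Icc (-(km : ℤ)) (km : ℤ) :=
    Finset.mem_Icc.mpr ⟨by omega, by omega⟩
  have h2 : (-1 : ℤ) ∈ Finset.Icc (-(km : ℤ)) (km : ℤ) := Finset.mem_Icc.mpr ⟨by omega, by omega⟩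
  have h3 : (0 : ℤ) ∈ Finset.Icc (-(km : ℤ)) (km : ℤ) := Finset.mem_Icc.mpr ⟨by omega, by omega⟩
  have h4 : (1 : ℤ) ∈ Finset.Icc (-(km : ℤ)) (km : ℤ) := Finset.mem_Icc.mpr ⟨by omega, by omega⟩
  have h5 : min (k + 1) (km : ℤ) ∈ Finset.Icc (-(km : ℤ)) (km : ℤ) :=
    Finset.mem_Icc.mpr ⟨by omega, by omega⟩
  simp only [fasaP, add_mul]
  rw [Finset.sum_add_distrib, Finset.sum_add_distrib, Finset.sum_add_distrib,
    Finset.sum_add_distrib]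
  rw [sum_pt' km g _ _ h1 Q0, sum_pt' km g _ _ h2 Q0, sum_pt km g _ h3 Q1,
    sum_pt' km g _ _ h4 Qc, sum_pt' km g _ _ h5 Qc]
  split_ifs <;> (first | ring1 | (exfalso; omega))

lemma fasa_base (km : ℕ) (hkm : 1 ≤ km) (Q0 Q1 Qc : ℝ) (k j : ℤ)
    (hk : k ∈ Finset.Icc (-(km : ℤ)) (km : ℤ)) (hj : j ∈ Finset.Icc (-(km : ℤ)) (km : ℤ)) :
    Q0 * (if (if k ≤ 0 then max (k - 1) (-(km : ℤ)) else -1) = j then (1 : ℝ) else 0)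
      + Q1 * (if (0 : ℤ) = j then (1 : ℝ) else 0)
      + Qc * (if (if k < 0 then 1 else min (k + 1) (km : ℤ)) = j then (1 : ℝ) else 0)
      = fasaF km Q0 Q1 Qc 1 k j := by
  simp only [Finset.mem_Icc] at hk hj
  have hi0 : (if k ≤ 0 then max (k - 1) (-(km : ℤ)) else -1) < 0 := by split_ifs <;> omega
  have hic : 0 < (if k < 0 then 1 else min (k + 1) (km : ℤ)) := by split_ifs <;> omega
  rcases lt_trichotomy j 0 with hjn | rfl | hjp
  · rw [fasaF_neg _ _ _ _ _ _ _ hjn]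
    have e1 : (if 0 < k then -((1 : ℕ) : ℤ) else max (k - ((1 : ℕ) : ℤ)) (-(km : ℤ)))
        = (if k ≤ 0 then max (k - 1) (-(km : ℤ)) else -1) := by
      split_ifs <;> omega
    rw [e1, if_neg (by omega : ¬ -((1 : ℕ) : ℤ) < j), if_neg (by omega : ¬ (0 : ℤ) = j),
      if_neg (by omega : ¬ (if k < 0 then 1 else min (k + 1) (km : ℤ)) = j)]
    by_cases h : (if k ≤ 0 then max (k - 1) (-(km : ℤ)) else -1) = j
    · rw [if_pos h, if_pos h.symm]; simp
    · rw [if_neg h, if_neg (fun hh => h hh.symm)]; simp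
  · rw [fasaF_zero, if_pos rfl, if_neg (by omega), if_neg (by omega)]; ring
  · rw [fasaF_pos _ _ _ _ _ _ _ hjp]
    rw [if_neg (by omega : ¬ j < ((1 : ℕ) : ℤ)), if_neg (by omega : ¬ (0 : ℤ) = j),
      if_neg (by omega : ¬ (if k ≤ 0 then max (k - 1) (-(km : ℤ)) else -1) = j)]
    have e1 : (if k < 0 then ((1 : ℕ) : ℤ) else min (k + ((1 : ℕ) : ℤ)) (km : ℤ))
        = (if k < 0 then 1 else min (k + 1) (km : ℤ)) := by norm_num
    rw [e1]
    by_cases h : (if k < 0 then 1 else min (k + 1) (km : ℤ)) = j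
    · rw [if_pos h, if_pos h.symm]; simp
    · rw [if_neg h, if_neg (fun hh => h hh.symm)]; simp

lemma fasa_step (km : ℕ) (hkm : 1 ≤ km) (Q0 Q1 Qc : ℝ) (hsum : Q0 + Q1 + Qc = 1)
    (n : ℕ) (hn : 1 ≤ n) (hnk : n + 1 ≤ km) (k j : ℤ)
    (hk : k ∈ Finset.Icc (-(km : ℤ)) (km : ℤ)) (hj : j ∈ Finset.Icc (-(km : ℤ)) (km : ℤ)) :
    Q0 * fasaF km Q0 Q1 Qc n (if k ≤ 0 then max (k - 1) (-(km : ℤ)) else -1) j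
      + Q1 * fasaF km Q0 Q1 Qc n 0 j
      + Qc * fasaF km Q0 Q1 Qc n (if k < 0 then 1 else min (k + 1) (km : ℤ)) j
      = fasaF km Q0 Q1 Qc (n + 1) k j := by
  simp only [Finset.mem_Icc] at hk hj
  have hi0 : (if k ≤ 0 then max (k - 1) (-(km : ℤ)) else -1) < 0 := by split_ifs <;> omega
  have hic : 0 < (if k < 0 then 1 else min (k + 1) (km : ℤ)) := by split_ifs <;> omega
  set i0 := (if k ≤ 0 then max (k - 1) (-(km : ℤ)) else -1) with hdef0
  set ic := (if k < 0 then 1 else min (k + 1) (km : ℤ)) with hdefc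
  rcases lt_trichotomy j 0 with hjn | rfl | hjp
  · rw [fasaF_neg _ _ _ _ _ _ _ hjn, fasaF_neg _ _ _ _ _ _ _ hjn,
      fasaF_neg _ _ _ _ _ _ _ hjn, fasaF_neg _ _ _ _ _ _ _ hjn]
    push_cast
    have e0 : (if 0 < i0 then -(n : ℤ) else max (i0 - n) (-(km : ℤ)))
        = (if 0 < k then -((n : ℤ) + 1) else max (k - ((n : ℤ) + 1)) (-(km : ℤ))) := by
      rw [if_neg (by omega), hdef0]
      split_ifs <;> omega
    have ez : max ((0 : ℤ) - n) (-(km : ℤ)) = -(n : ℤ) := by omega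
    have ec : (if 0 < ic then -(n : ℤ) else max (ic - n) (-(km : ℤ))) = -(n : ℤ) := if_pos hic
    rw [e0, ez, ec]
    have hB : (if 0 < k then -((n : ℤ) + 1) else max (k - ((n : ℤ) + 1)) (-(km : ℤ)))
        ≤ -((n : ℤ) + 1) := by split_ifs <;> omega
    by_cases h1 : -(n : ℤ) < j
    · simp only [if_pos h1, if_pos (show -((n : ℤ) + 1) < j by omega)]
      linear_combination (Q0 ^ j.natAbs * (1 - Q0)) * hsum
    · by_cases h2 : j = -(n : ℤ)
      · simp only [if_neg h1, if_pos h2,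
          if_neg (show ¬ j = (if 0 < k then -((n : ℤ) + 1)
            else max (k - ((n : ℤ) + 1)) (-(km : ℤ))) by omega),
          if_pos (show -((n : ℤ) + 1) < j by omega)]
        have hnat : j.natAbs = n := by omega
        rw [hnat]
        linear_combination Q0 ^ n * hsum
      · simp only [if_neg h1, if_neg h2, if_neg (show ¬ -((n : ℤ) + 1) < j by omega)]
        by_cases h3 : j = (if 0 < k then -((n : ℤ) + 1) else max (k - ((n : ℤ) + 1)) (-(km : ℤ)))
        · simp only [if_pos h3]; ring
        · simp only [if_neg h3]; ring
  · rw [fasaF_zero, fasaF_zero, fasaF_zero, fasaF_zero]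
    linear_combination Q1 * hsum
  · rw [fasaF_pos _ _ _ _ _ _ _ hjp, fasaF_pos _ _ _ _ _ _ _ hjp,
      fasaF_pos _ _ _ _ _ _ _ hjp, fasaF_pos _ _ _ _ _ _ _ hjp]
    push_cast
    have e0 : (if i0 < 0 then (n : ℤ) else min (i0 + n) (km : ℤ)) = (n : ℤ) := if_pos hi0
    have ez : min ((0 : ℤ) + n) (km : ℤ) = (n : ℤ) := by omega
    have ec : (if ic < 0 then (n : ℤ) else min (ic + n) (km : ℤ))
        = (if k < 0 then ((n : ℤ) + 1) else min (k + ((n : ℤ) + 1)) (km : ℤ)) := by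
      rw [if_neg (by omega), hdefc]
      split_ifs <;> omega
    rw [e0, ez, ec]
    have hT : ((n : ℤ) + 1)
        ≤ (if k < 0 then ((n : ℤ) + 1) else min (k + ((n : ℤ) + 1)) (km : ℤ)) := by
      split_ifs <;> omega
    by_cases h1 : j < (n : ℤ)
    · simp only [if_pos h1, if_pos (show j < (n : ℤ) + 1 by omega)]
      linear_combination (Qc ^ j.natAbs * (1 - Qc)) * hsum
    · by_cases h2 : j = (n : ℤ)
      · simp only [if_neg h1, if_pos h2,
          if_neg (show ¬ j = (if k < 0 then ((n : ℤ) + 1)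
            else min (k + ((n : ℤ) + 1)) (km : ℤ)) by omega),
          if_pos (show j < (n : ℤ) + 1 by omega)]
        have hnat : j.natAbs = n := by omega
        rw [hnat]
        linear_combination Qc ^ n * hsum
      · simp only [if_neg h1, if_neg h2, if_neg (show ¬ j < (n : ℤ) + 1 by omega)]
        by_cases h3 : j = (if k < 0 then ((n : ℤ) + 1) else min (k + ((n : ℤ) + 1)) (km : ℤ))
        · simp only [if_pos h3]; ring
        · simp only [if_neg h3]; ring

lemma fasaPn_eq_fasaF (km : ℕ) (hkm : 1 ≤ km) (Q0 Q1 Qc : ℝ) (hsum : Q0 + Q1 + Qc = 1) :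
    ∀ n, 1 ≤ n → n ≤ km → ∀ k ∈ Finset.Icc (-(km : ℤ)) (km : ℤ),
      ∀ j ∈ Finset.Icc (-(km : ℤ)) (km : ℤ),
        fasaPn km Q0 Q1 Qc n k j = fasaF km Q0 Q1 Qc n k j := by
  intro n
  induction n with
  | zero => intro h; exact absurd h (by omega)
  | succ n ih =>
    intro _ hle k hk j hj
    rw [fasaPn]
    rcases Nat.eq_zero_or_pos n with rfl | hn
    · have hz : ∀ i : ℤ, fasaPn km Q0 Q1 Qc 0 i j = (if i = j then (1 : ℝ) else 0) :=
        fun i => rfl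
      simp only [hz]
      rw [fasa_sum km hkm Q0 Q1 Qc k hk (fun i => if i = j then (1 : ℝ) else 0)]
      exact fasa_base km hkm Q0 Q1 Qc k j hk hj
    · have hs : ∑ i ∈ Finset.Icc (-(km : ℤ)) (km : ℤ),
          fasaP km Q0 Q1 Qc k i * fasaPn km Q0 Q1 Qc n i j
          = ∑ i ∈ Finset.Icc (-(km : ℤ)) (km : ℤ),
            fasaP km Q0 Q1 Qc k i * fasaF km Q0 Q1 Qc n i j :=
        Finset.sum_congr rfl fun i hi => by rw [ih hn (by omega) i hi j hj]
      rw [hs, fasa_sum km hkm Q0 Q1 Qc k hk (fun i => fasaF km Q0 Q1 Qc n i j)]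
      exact fasa_step km hkm Q0 Q1 Qc hsum n hn (by omega) k j hk hj

lemma fasaF_km (km : ℕ) (hkm : 1 ≤ km) (Q0 Q1 Qc : ℝ) (k j : ℤ)
    (hk : k ∈ Finset.Icc (-(km : ℤ)) (km : ℤ)) (hj : j ∈ Finset.Icc (-(km : ℤ)) (km : ℤ)) :
    fasaF km Q0 Q1 Qc km k j = fasaPi km Q0 Q1 Qc j := by
  simp only [Finset.mem_Icc] at hk hj
  have htop : (if k < 0 then (km : ℤ) else min (k + km) (km : ℤ)) = (km : ℤ) := by
    split_ifs <;> omega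
  have hbot : (if 0 < k then -(km : ℤ) else max (k - km) (-(km : ℤ))) = -(km : ℤ) := by
    split_ifs <;> omega
  rw [fasaF, fasaPi, htop, hbot]
  split_ifs <;> first | rfl | (exfalso; omega)

/-- The FASA memory chain reaches its stationary distribution exactly after k_m steps:
the k_m-step transition probability from any state k to any state j equals π_j. -/
theorem fasa_memory_chain_km_step (km : ℕ) (hkm : 1 ≤ km) (Q0 Q1 Qc : ℝ)
    (h0 : Q0 ∈ Set.Ioo (0 : ℝ) 1) (h1 : Q1 ∈ Set.Ioo (0 : ℝ) 1)
    (hc : Qc ∈ Set.Ioo (0 : ℝ) 1) (hsum : Q0 + Q1 + Qc = 1) :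
    ∀ k ∈ Finset.Icc (-(km : ℤ)) (km : ℤ), ∀ j ∈ Finset.Icc (-(km : ℤ)) (km : ℤ),
      fasaPn km Q0 Q1 Qc km k j = fasaPi km Q0 Q1 Qc j := by
  intro k hk j hj
  rw [fasaPn_eq_fasaF km hkm Q0 Q1 Qc hsum km hkm le_rfl k hk j hj,
    fasaF_km km hkm Q0 Q1 Qc k j hk hj]
end
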